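/- arXiv:2407.11411 — 2 statements merged into one kernel-verified Lean document; each statement's English description precedes it below -/
import Mathlib

section
/- Let r, s ≥ 3 be integers with r odd and s even. If the pair (Γ(r,s), H(r,s)) is basic of cycle type, then (r,s) = (p,4) or (p,2q) for some odd primes p and q. -/
/-!
Let `g = Equiv.addRight v` be a translation in `H(r,s)` with `v = (e,0)` or `v = (0,f)`.
Conjugating by `μ`, `σν`, `τ` sends `g` to `g` or `g⁻¹`, so `⟨g⟩` is normal in `H(r,s)`.
If `v` reduces to `0` in `ℤ_a × ℤ_b` for some `a ∣ r`, `b ∣ s` with `a, b > 2`, the reduction is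
constant on `⟨g⟩`-orbits and separates `(0,0)`, `(1,1)`, `(1,-1)`, `(-1,1)`; so the orbit of
`(0,0)` has three distinct neighbours in the normal quotient, which therefore has more than two
vertices and is not a cycle. A proper divisor `e > 2` of the odd number `r` gives `v = (e,0)`,
the translation `μ^e`; writing `s = 2t`, a proper divisor `w ≥ 2` of `t` gives `v = (0,2w)`, the
translation `(σν)^(2w)`. Hence `r` and `s/2` are prime.
-/

open SimpleGraph

namespace OG4

variable {V : Type*} {W : Type*}

/-! ### Normal quotients, cycles, and basic pairs -/

/-- The setoid of orbits of a group `N` of permutations of `V`. -/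
def orbitSetoid (N : Subgroup (Equiv.Perm V)) : Setoid V := MulAction.orbitRel N V

/-- The (normal) quotient graph of a graph `Γ` with respect to a group `N` of permutations:
its vertices are the `N`-orbits, two distinct orbits being adjacent iff some vertex of one is
adjacent in `Γ` to some vertex of the other. -/
def quotientGraph (Γ : SimpleGraph V) (N : Subgroup (Equiv.Perm V)) :
    SimpleGraph (Quotient (orbitSetoid N)) :=
  SimpleGraph.fromRel fun a b =>
    ∃ x y : V, Quotient.mk (orbitSetoid N) x = a ∧ Quotient.mk (orbitSetoid N) y = b ∧ Γ.Adj x y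

/-- `N` is a normal subgroup of the subgroup `G` (of some ambient group). -/
def NormalIn {G : Type*} [Group G] (N H : Subgroup G) : Prop :=
  N ≤ H ∧ ∀ h ∈ H, ∀ n ∈ N, h * n * h⁻¹ ∈ N

/-- A graph is isomorphic to a cycle graph `C_m` for some `m ≥ 3`. -/
def IsoCycle (Δ : SimpleGraph W) : Prop :=
  ∃ m : ℕ, 3 ≤ m ∧ Nonempty (Δ ≃g SimpleGraph.cycleGraph m)

/-- Every normal quotient of `(Γ, G)` relative to a nontrivial normal subgroup is degenerate:
it has at most 2 vertices or is a cycle. -/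
def IsBasic (Γ : SimpleGraph V) (G : Subgroup (Equiv.Perm V)) : Prop :=
  ∀ N : Subgroup (Equiv.Perm V), NormalIn N G → N ≠ ⊥ →
    Nat.card (Quotient (orbitSetoid N)) ≤ 2 ∨ IsoCycle (quotientGraph Γ N)

/-- `(Γ, G)` is basic of cycle type. -/
def BasicOfCycleType (Γ : SimpleGraph V) (G : Subgroup (Equiv.Perm V)) : Prop :=
  IsBasic Γ G ∧
    ∃ N : Subgroup (Equiv.Perm V), NormalIn N G ∧ N ≠ ⊥ ∧ IsoCycle (quotientGraph Γ N)

/-- The kernel of the action of `G` on the set of `N`-orbits. -/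
def orbitKernel (G N : Subgroup (Equiv.Perm V)) : Subgroup (Equiv.Perm V) where
  carrier := {g | g ∈ G ∧ ∀ x : V,
    Quotient.mk (orbitSetoid N) (g x) = Quotient.mk (orbitSetoid N) x}
  one_mem' := ⟨G.one_mem, fun x => by simp⟩
  mul_mem' := by
    rintro a b ⟨haG, ha⟩ ⟨hbG, hb⟩
    refine ⟨G.mul_mem haG hbG, fun x => ?_⟩
    rw [Equiv.Perm.mul_apply, ha (b x), hb x]
  inv_mem' := by
    rintro a ⟨haG, ha⟩
    refine ⟨G.inv_mem haG, fun x => ?_⟩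
    have h := ha (a⁻¹ x)
    rw [← Equiv.Perm.mul_apply, mul_inv_cancel, Equiv.Perm.one_apply] at h
    exact h.symm

/-- `(Γ, G)` has a pair of independent cyclic normal quotients. -/
def HasIndepCyclicQuotients (Γ : SimpleGraph V) (G : Subgroup (Equiv.Perm V)) : Prop :=
  ∃ N M : Subgroup (Equiv.Perm V), NormalIn N G ∧ NormalIn M G ∧
    IsoCycle (quotientGraph Γ N) ∧ IsoCycle (quotientGraph Γ M) ∧
    ¬ IsoCycle (quotientGraph Γ (orbitKernel G N ⊓ orbitKernel G M))

/-- `(Γ, G)` is basic of independent-cycle type. -/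
def BasicOfIndependentCycleType (Γ : SimpleGraph V) (G : Subgroup (Equiv.Perm V)) : Prop :=
  IsBasic Γ G ∧ HasIndepCyclicQuotients Γ G

/-- Isomorphism of graph-group pairs: a graph isomorphism conjugating one group onto the other. -/
def PairIso (Γ : SimpleGraph V) (G : Subgroup (Equiv.Perm V))
    (Δ : SimpleGraph W) (H : Subgroup (Equiv.Perm W)) : Prop :=
  ∃ e : Γ ≃g Δ, ∀ h : Equiv.Perm W, h ∈ H ↔ ∃ g ∈ G, e.toEquiv.permCongr g = h

/-! ### Minimal normal subgroups -/

/-- `M` is a minimal normal subgroup of the ambient group. -/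
def IsMinimalNormal {G : Type*} [Group G] (M : Subgroup G) : Prop :=
  M.Normal ∧ M ≠ ⊥ ∧ ∀ N : Subgroup G, N.Normal → N ≤ M → N = ⊥ ∨ N = M

/-- `M` is a minimal normal subgroup of the subgroup `H`. -/
def IsMinimalNormalIn {G : Type*} [Group G] (M H : Subgroup G) : Prop :=
  NormalIn M H ∧ M ≠ ⊥ ∧ ∀ N : Subgroup G, NormalIn N H → N ≤ M → N = ⊥ ∨ N = M

/-! ### The graphs `Γ(r,s)` and their automorphisms -/

/-- In `Γ(r,s)`, the vertex `(i,j)` is joined to the four vertices `(i ± 1, j ± 1)`. -/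
def gammaRel (r s : ℕ) (x y : ZMod r × ZMod s) : Prop :=
  (y.1 = x.1 + 1 ∨ y.1 = x.1 - 1) ∧ (y.2 = x.2 + 1 ∨ y.2 = x.2 - 1)

/-- The graph `Γ(r,s)` on `ℤ_r × ℤ_s`. -/
def Gamma (r s : ℕ) : SimpleGraph (ZMod r × ZMod s) := SimpleGraph.fromRel (gammaRel r s)

/-- `μ : (i,j) ↦ (i+1, j)`. -/
def mu (r s : ℕ) : Equiv.Perm (ZMod r × ZMod s) :=
  (Equiv.addRight (1 : ZMod r)).prodCongr (Equiv.refl (ZMod s))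

/-- `ν : (i,j) ↦ (i, j+1)`. -/
def nu (r s : ℕ) : Equiv.Perm (ZMod r × ZMod s) :=
  (Equiv.refl (ZMod r)).prodCongr (Equiv.addRight (1 : ZMod s))

/-- `σ : (i,j) ↦ (-i, j)`. -/
def sigma (r s : ℕ) : Equiv.Perm (ZMod r × ZMod s) :=
  (Equiv.neg (ZMod r)).prodCongr (Equiv.refl (ZMod s))

/-- `τ : (i,j) ↦ (-i, -j)`. -/
def tau (r s : ℕ) : Equiv.Perm (ZMod r × ZMod s) :=
  (Equiv.neg (ZMod r)).prodCongr (Equiv.neg (ZMod s))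

/-- `σν : (i,j) ↦ (-i, j+1)`. -/
def sigmaNu (r s : ℕ) : Equiv.Perm (ZMod r × ZMod s) :=
  (Equiv.neg (ZMod r)).prodCongr (Equiv.addRight (1 : ZMod s))

/-- `μν : (i,j) ↦ (i+1, j+1)`. -/
def muNu (r s : ℕ) : Equiv.Perm (ZMod r × ZMod s) :=
  (Equiv.addRight (1 : ZMod r)).prodCongr (Equiv.addRight (1 : ZMod s))

/-- `σμν : (i,j) ↦ (-(i+1), j+1)`. -/
def sigmaMuNu (r s : ℕ) : Equiv.Perm (ZMod r × ZMod s) :=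
  ((Equiv.addRight (1 : ZMod r)).trans (Equiv.neg (ZMod r))).prodCongr
    (Equiv.addRight (1 : ZMod s))

/-- `μ² : (i,j) ↦ (i+2, j)`. -/
def muSq (r s : ℕ) : Equiv.Perm (ZMod r × ZMod s) :=
  (Equiv.addRight (2 : ZMod r)).prodCongr (Equiv.refl (ZMod s))

/-- `ν² : (i,j) ↦ (i, j+2)`. -/
def nuSq (r s : ℕ) : Equiv.Perm (ZMod r × ZMod s) :=
  (Equiv.refl (ZMod r)).prodCongr (Equiv.addRight (2 : ZMod s))

/-- `μ^k : (i,j) ↦ (i+k, j)`. -/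
def muPow (r s k : ℕ) : Equiv.Perm (ZMod r × ZMod s) :=
  (Equiv.addRight ((k : ZMod r))).prodCongr (Equiv.refl (ZMod s))

/-- `μ^k ν² : (i,j) ↦ (i+k, j+2)`. -/
def muPowNuSq (r s k : ℕ) : Equiv.Perm (ZMod r × ZMod s) :=
  (Equiv.addRight ((k : ZMod r))).prodCongr (Equiv.addRight (2 : ZMod s))

/-- `G(r,s) = ⟨μ, ν, σ⟩`. -/
def Ggroup (r s : ℕ) : Subgroup (Equiv.Perm (ZMod r × ZMod s)) :=
  Subgroup.closure {mu r s, nu r s, sigma r s}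

/-- `H(r,s) = ⟨μ, σν, τ⟩`. -/
def Hgroup (r s : ℕ) : Subgroup (Equiv.Perm (ZMod r × ZMod s)) :=
  Subgroup.closure {mu r s, sigmaNu r s, tau r s}

/-! ### The graphs `Γ⁺(r,s)` (for `r`, `s` even) -/

/-- `X⁺`: the set of `(i,j)` with `i` and `j` of the same parity. -/
def XPlus (r s : ℕ) : Set (ZMod r × ZMod s) := {x | x.1.val % 2 = x.2.val % 2}

/-- `Γ⁺(r,s)`, the subgraph of `Γ(r,s)` induced on `X⁺`. -/
def GammaPlus (r s : ℕ) : SimpleGraph (XPlus r s) :=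
  SimpleGraph.induce (XPlus r s) (Gamma r s)

section parity

lemma val_add_one_mod_two (r : ℕ) (hr : 2 ∣ r) (hr0 : r ≠ 0) (i : ZMod r) :
    (i + 1).val % 2 = (i.val + 1) % 2 := by
  haveI : NeZero r := ⟨hr0⟩
  haveI : Fact (1 < r) := ⟨by have := Nat.le_of_dvd (Nat.pos_of_ne_zero hr0) hr; omega⟩
  rw [ZMod.val_add, Nat.mod_mod_of_dvd _ hr, ZMod.val_one]

lemma val_add_two_mod_two (r : ℕ) (hr : 2 ∣ r) (hr0 : r ≠ 0) (i : ZMod r) :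
    (i + 2).val % 2 = i.val % 2 := by
  have h1 := val_add_one_mod_two r hr hr0 i
  have h2 := val_add_one_mod_two r hr hr0 (i + 1)
  rw [show i + 1 + 1 = i + 2 by ring] at h2
  omega

lemma val_neg_mod_two (r : ℕ) (hr : 2 ∣ r) (hr0 : r ≠ 0) (i : ZMod r) :
    (-i).val % 2 = i.val % 2 := by
  haveI : NeZero r := ⟨hr0⟩
  rcases eq_or_ne i 0 with h | h
  · simp [h]
  · have h1 : (-i).val = r - i.val := by rw [ZMod.neg_val]; simp [h]
    have h2 : i.val < r := ZMod.val_lt i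
    have h3 : i.val ≠ 0 := fun hh => h ((ZMod.val_eq_zero i).mp hh)
    obtain ⟨t, rfl⟩ := hr
    rw [h1]
    omega

end parity

section plusPerms

variable (r s : ℕ)

/-- The restriction of `μ²` to `X⁺`. -/
def muSqP (hr : 2 ∣ r) (hr0 : r ≠ 0) : Equiv.Perm (XPlus r s) :=
  (muSq r s).subtypePerm (by
    intro x
    have h := val_add_two_mod_two r hr hr0 x.1
    simp only [XPlus, Set.mem_setOf_eq, muSq, Equiv.prodCongr_apply, Prod.map,
      Equiv.coe_addRight, Equiv.refl_apply]
    omega)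

/-- The restriction of `ν²` to `X⁺`. -/
def nuSqP (hs : 2 ∣ s) (hs0 : s ≠ 0) : Equiv.Perm (XPlus r s) :=
  (nuSq r s).subtypePerm (by
    intro x
    have h := val_add_two_mod_two s hs hs0 x.2
    simp only [XPlus, Set.mem_setOf_eq, nuSq, Equiv.prodCongr_apply, Prod.map,
      Equiv.coe_addRight, Equiv.refl_apply]
    omega)

/-- The restriction of `μν` to `X⁺`. -/
def muNuP (hr : 2 ∣ r) (hr0 : r ≠ 0) (hs : 2 ∣ s) (hs0 : s ≠ 0) : Equiv.Perm (XPlus r s) :=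
  (muNu r s).subtypePerm (by
    intro x
    have h1 := val_add_one_mod_two r hr hr0 x.1
    have h2 := val_add_one_mod_two s hs hs0 x.2
    simp only [XPlus, Set.mem_setOf_eq, muNu, Equiv.prodCongr_apply, Prod.map,
      Equiv.coe_addRight]
    omega)

/-- The restriction of `σ` to `X⁺`. -/
def sigmaP (hr : 2 ∣ r) (hr0 : r ≠ 0) : Equiv.Perm (XPlus r s) :=
  (sigma r s).subtypePerm (by
    intro x
    have h := val_neg_mod_two r hr hr0 x.1
    simp only [XPlus, Set.mem_setOf_eq, sigma, Equiv.prodCongr_apply, Prod.map,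
      Equiv.neg_apply, Equiv.refl_apply]
    omega)

/-- The restriction of `τ` to `X⁺`. -/
def tauP (hr : 2 ∣ r) (hr0 : r ≠ 0) (hs : 2 ∣ s) (hs0 : s ≠ 0) : Equiv.Perm (XPlus r s) :=
  (tau r s).subtypePerm (by
    intro x
    have h1 := val_neg_mod_two r hr hr0 x.1
    have h2 := val_neg_mod_two s hs hs0 x.2
    simp only [XPlus, Set.mem_setOf_eq, tau, Equiv.prodCongr_apply, Prod.map,
      Equiv.neg_apply]
    omega)

/-- The restriction of `σμν` to `X⁺`. -/
def sigmaMuNuP (hr : 2 ∣ r) (hr0 : r ≠ 0) (hs : 2 ∣ s) (hs0 : s ≠ 0) :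
    Equiv.Perm (XPlus r s) :=
  (sigmaMuNu r s).subtypePerm (by
    intro x
    have h1 := val_neg_mod_two r hr hr0 (x.1 + 1)
    have h2 := val_add_one_mod_two r hr hr0 x.1
    have h3 := val_add_one_mod_two s hs hs0 x.2
    simp only [XPlus, Set.mem_setOf_eq, sigmaMuNu, Equiv.prodCongr_apply, Prod.map,
      Equiv.trans_apply, Equiv.coe_addRight, Equiv.neg_apply]
    omega)

/-- `G⁺(r,s) = ⟨μ², μν, σ⟩` acting on `X⁺`. -/
def GPlusGroup (hr : 2 ∣ r) (hr0 : r ≠ 0) (hs : 2 ∣ s) (hs0 : s ≠ 0) :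
    Subgroup (Equiv.Perm (XPlus r s)) :=
  Subgroup.closure {muSqP r s hr hr0, muNuP r s hr hr0 hs hs0, sigmaP r s hr hr0}

/-- `H⁺(r,s) = ⟨μ², σμν, τ⟩` acting on `X⁺`. -/
def HPlusGroup (hr : 2 ∣ r) (hr0 : r ≠ 0) (hs : 2 ∣ s) (hs0 : s ≠ 0) :
    Subgroup (Equiv.Perm (XPlus r s)) :=
  Subgroup.closure
    {muSqP r s hr hr0, sigmaMuNuP r s hr hr0 hs hs0, tauP r s hr hr0 hs hs0}

end plusPerms

/-! ### The standard double cover `Γ₂(r,s)` -/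

/-- Adjacency of the double cover: `(i,j)_δ ~ (i ± 1, j ± 1)_{δ+1}`. -/
def gamma2Rel (r s : ℕ) (x y : (ZMod r × ZMod s) × ZMod 2) : Prop :=
  (y.1.1 = x.1.1 + 1 ∨ y.1.1 = x.1.1 - 1) ∧ (y.1.2 = x.1.2 + 1 ∨ y.1.2 = x.1.2 - 1) ∧
    y.2 = x.2 + 1

/-- `Γ₂(r,s)`, the standard double cover of `Γ(r,s)`. -/
def Gamma2 (r s : ℕ) : SimpleGraph ((ZMod r × ZMod s) × ZMod 2) :=
  SimpleGraph.fromRel (gamma2Rel r s)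

/-- `μ : (i,j)_δ ↦ (i+1, j)_δ` on the double cover. -/
def muD (r s : ℕ) : Equiv.Perm ((ZMod r × ZMod s) × ZMod 2) :=
  (mu r s).prodCongr (Equiv.refl (ZMod 2))

/-- `ν : (i,j)_δ ↦ (i, j+1)_δ` on the double cover. -/
def nuD (r s : ℕ) : Equiv.Perm ((ZMod r × ZMod s) × ZMod 2) :=
  (nu r s).prodCongr (Equiv.refl (ZMod 2))

/-- `σ : (i,j)_δ ↦ (i, -j)_{δ+1}` on the double cover. -/
def sigmaD (r s : ℕ) : Equiv.Perm ((ZMod r × ZMod s) × ZMod 2) :=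
  ((Equiv.refl (ZMod r)).prodCongr (Equiv.neg (ZMod s))).prodCongr
    (Equiv.addRight (1 : ZMod 2))

/-- `τ : (i,j)_δ ↦ (-i, -j)_δ` on the double cover. -/
def tauD (r s : ℕ) : Equiv.Perm ((ZMod r × ZMod s) × ZMod 2) :=
  (tau r s).prodCongr (Equiv.refl (ZMod 2))

/-- `G₂(r,s) = ⟨μ, ν, σ, τ⟩` on the double cover. -/
def G2group (r s : ℕ) : Subgroup (Equiv.Perm ((ZMod r × ZMod s) × ZMod 2)) :=
  Subgroup.closure {muD r s, nuD r s, sigmaD r s, tauD r s}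

theorem mem_normalizer_zpowers_of_conj {G : Type*} [Group G] {c g : G}
    (h : c * g * c⁻¹ = g ∨ c * g * c⁻¹ = g⁻¹) :
    c ∈ Subgroup.normalizer (Subgroup.zpowers g : Set G) := by
  rw [Subgroup.mem_normalizer_iff_map_conj_eq, MonoidHom.map_zpowers]
  rcases h with h | h <;> simp [MulAut.conj_apply, h, Subgroup.zpowers_inv]

theorem map_eq_of_mk_zpowers_addRight_eq {A B : Type*} [AddGroup A] [AddGroup B] (φ : A →+ B)
    {v : A} (hv : φ v = 0) {x y : A}
    (h : Quotient.mk (orbitSetoid (Subgroup.zpowers (Equiv.addRight v))) x =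
      Quotient.mk (orbitSetoid (Subgroup.zpowers (Equiv.addRight v))) y) :
    φ x = φ y := by
  obtain ⟨⟨n, hn⟩, rfl⟩ := MulAction.orbitRel_apply.mp (Quotient.exact h)
  obtain ⟨k, rfl⟩ := Subgroup.mem_zpowers_iff.mp hn
  change φ ((Equiv.addRight v ^ k) y) = φ y
  simp [Equiv.zsmul_addRight, hv]

theorem quotientGraph_adj_mk {Γ : SimpleGraph V} {N : Subgroup (Equiv.Perm V)} {x y : V}
    (hxy : Γ.Adj x y) (hne : Quotient.mk (orbitSetoid N) x ≠ Quotient.mk (orbitSetoid N) y) :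
    (quotientGraph Γ N).Adj (Quotient.mk (orbitSetoid N) x) (Quotient.mk (orbitSetoid N) y) := by
  rw [quotientGraph, fromRel_adj]
  exact ⟨hne, Or.inl ⟨x, y, rfl, rfl, hxy⟩⟩

theorem two_lt_card_of_adj_of_adj [Finite W] {Δ : SimpleGraph W} {u a b : W}
    (ha : Δ.Adj u a) (hb : Δ.Adj u b) (hab : a ≠ b) : 2 < Nat.card W := by
  have h3 : ({u, a, b} : Set W).ncard = 3 :=
    Set.ncard_eq_three.mpr ⟨u, a, b, ha.ne, hb.ne, hab, rfl⟩
  have := Set.ncard_le_card ({u, a, b} : Set W)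
  omega

theorem not_isoCycle_of_three_neighbors {Δ : SimpleGraph W} {u a b c : W}
    (ha : Δ.Adj u a) (hb : Δ.Adj u b) (hc : Δ.Adj u c)
    (hab : a ≠ b) (hac : a ≠ c) (hbc : b ≠ c) : ¬ IsoCycle Δ := by
  rintro ⟨m, hm, ⟨φ⟩⟩
  obtain ⟨n, rfl⟩ : ∃ n, m = n + 2 := ⟨m - 2, by omega⟩
  have hsub : φ '' {a, b, c} ⊆ {φ u - 1, φ u + 1} := by
    rintro _ ⟨x, hx, rfl⟩
    rw [← cycleGraph_neighborSet, mem_neighborSet, φ.map_adj_iff]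
    rcases hx with rfl | rfl | rfl <;> assumption
  have hle := Set.ncard_le_ncard hsub
  rw [Set.ncard_image_of_injective _ φ.injective,
    Set.ncard_eq_three.mpr ⟨a, b, c, hab, hac, hbc, rfl⟩] at hle
  have := (Set.ncard_insert_le (φ u - 1) {φ u + 1}).trans_eq
    (congrArg (· + 1) (Set.ncard_singleton _))
  omega

theorem not_card_le_two_or_isoCycle_of_three_neighbors [Finite W] {Δ : SimpleGraph W}
    {u a b c : W} (ha : Δ.Adj u a) (hb : Δ.Adj u b) (hc : Δ.Adj u c)
    (hab : a ≠ b) (hac : a ≠ c) (hbc : b ≠ c) : ¬ (Nat.card W ≤ 2 ∨ IsoCycle Δ) := by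
  rintro (hcard | hcyc)
  · exact hcard.not_gt (two_lt_card_of_adj_of_adj ha hb hab)
  · exact not_isoCycle_of_three_neighbors ha hb hc hab hac hbc hcyc

section Torus

variable {r s : ℕ}

theorem mu_eq_addRight : mu r s = Equiv.addRight (1, 0) := by
  ext x <;> simp [mu]

theorem sigmaNu_mul_self : sigmaNu r s * sigmaNu r s = Equiv.addRight (0, 2) := by
  ext x <;> simp [sigmaNu, add_assoc, one_add_one_eq_two]

theorem sigmaNu_mul_addRight_mul_inv (v : ZMod r × ZMod s) :
    sigmaNu r s * Equiv.addRight v * (sigmaNu r s)⁻¹ = Equiv.addRight (-v.1, v.2) := by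
  rw [mul_inv_eq_iff_eq_mul]
  ext x <;> simp [sigmaNu] <;> ring

theorem tau_mul_addRight_mul_inv (v : ZMod r × ZMod s) :
    tau r s * Equiv.addRight v * (tau r s)⁻¹ = (Equiv.addRight v)⁻¹ := by
  rw [mul_inv_eq_iff_eq_mul, Equiv.neg_addRight]
  ext x <;> simp [tau] <;> ring

theorem normalIn_Hgroup_zpowers_addRight {v : ZMod r × ZMod s} (hv : v.1 = 0 ∨ v.2 = 0)
    (hvH : Equiv.addRight v ∈ Hgroup r s) :
    NormalIn (Subgroup.zpowers (Equiv.addRight v)) (Hgroup r s) := by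
  refine ⟨Subgroup.zpowers_le.mpr hvH, Subgroup.le_normalizer_iff.mp ?_⟩
  rw [Hgroup, Subgroup.closure_le]
  rintro c (rfl | rfl | rfl) <;> apply mem_normalizer_zpowers_of_conj
  · left
    rw [mu_eq_addRight, mul_inv_eq_iff_eq_mul, ← Equiv.addRight_add, ← Equiv.addRight_add,
      add_comm]
  · rw [sigmaNu_mul_addRight_mul_inv, Equiv.neg_addRight]
    rcases hv with h | h
    · exact Or.inl (congrArg _ (Prod.ext (by simp [h]) rfl))
    · exact Or.inr (congrArg _ (Prod.ext rfl (by simp [h])))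
  · exact Or.inr (tau_mul_addRight_mul_inv v)

theorem addRight_natCast_zero_mem_Hgroup (e : ℕ) :
    Equiv.addRight ((e : ZMod r), (0 : ZMod s)) ∈ Hgroup r s := by
  have h : mu r s ^ e = Equiv.addRight ((e : ZMod r), (0 : ZMod s)) := by
    simp [mu_eq_addRight, Equiv.nsmul_addRight]
  exact h ▸ pow_mem (Subgroup.subset_closure (by simp)) e

theorem addRight_zero_two_mul_mem_Hgroup (w : ℕ) :
    Equiv.addRight ((0 : ZMod r), ((2 * w : ℕ) : ZMod s)) ∈ Hgroup r s := by
  have h : (sigmaNu r s * sigmaNu r s) ^ w =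
      Equiv.addRight ((0 : ZMod r), ((2 * w : ℕ) : ZMod s)) := by
    simp [sigmaNu_mul_self, Equiv.nsmul_addRight, mul_comm]
  have hσν : sigmaNu r s ∈ Hgroup r s := Subgroup.subset_closure (by simp)
  exact h ▸ pow_mem (mul_mem hσν hσν) w

theorem Gamma_adj_of_gammaRel {x y : ZMod r × ZMod s} (hne : x ≠ y) (h : gammaRel r s x y) :
    (Gamma r s).Adj x y := by
  rw [Gamma, fromRel_adj]
  exact ⟨hne, Or.inl h⟩

theorem not_isBasic_of_normalIn_zpowers_addRight [NeZero r] [NeZero s]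
    {G : Subgroup (Equiv.Perm (ZMod r × ZMod s))} {a b : ℕ} (ha : a ∣ r) (hb : b ∣ s)
    (ha2 : 2 < a) (hb2 : 2 < b) {v : ZMod r × ZMod s} (hv0 : v ≠ 0)
    (hva : ZMod.castHom ha (ZMod a) v.1 = 0) (hvb : ZMod.castHom hb (ZMod b) v.2 = 0)
    (hN : NormalIn (Subgroup.zpowers (Equiv.addRight v)) G) :
    ¬ IsBasic (Gamma r s) G := by
  have : Fact (2 < a) := ⟨ha2⟩
  have : Fact (2 < b) := ⟨hb2⟩
  have : Fact (1 < a) := ⟨by omega⟩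
  have : Fact (1 < b) := ⟨by omega⟩
  set N := Subgroup.zpowers (Equiv.addRight v)
  let φ : ZMod r × ZMod s →+ ZMod a × ZMod b :=
    (ZMod.castHom ha (ZMod a)).toAddMonoidHom.prodMap (ZMod.castHom hb (ZMod b)).toAddMonoidHom
  let q : ZMod r × ZMod s → Quotient (orbitSetoid N) := Quotient.mk _
  have hq : ∀ x y, φ x ≠ φ y → q x ≠ q y :=
    fun x y h hxy => h (map_eq_of_mk_zpowers_addRight_eq φ (Prod.ext hva hvb) hxy)
  have hφ : ∀ i j, φ (i, j) = (ZMod.castHom ha (ZMod a) i, ZMod.castHom hb (ZMod b) j) :=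
    fun _ _ => rfl
  have hadj : ∀ y, gammaRel r s (0, 0) y → φ (0, 0) ≠ φ y →
      (quotientGraph (Gamma r s) N).Adj (q (0, 0)) (q y) :=
    fun y hy hne => quotientGraph_adj_mk
      (Gamma_adj_of_gammaRel (fun h => hne (congrArg φ h)) hy) (hq _ _ hne)
  have h₁ := hadj (1, 1) (by simp [gammaRel]) (by simp [hφ, -ZMod.castHom_apply])
  have h₂ := hadj (1, -1) (by simp [gammaRel]) (by simp [hφ, -ZMod.castHom_apply])
  have h₃ := hadj (-1, 1) (by simp [gammaRel]) (by simp [hφ, -ZMod.castHom_apply])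
  have hbot : N ≠ ⊥ := by
    rw [Ne, Subgroup.zpowers_eq_bot]
    intro h
    exact hv0 (by simpa using DFunLike.congr_fun h 0)
  intro hbasic
  refine not_card_le_two_or_isoCycle_of_three_neighbors h₁ h₂ h₃ (hq _ _ ?_) (hq _ _ ?_)
    (hq _ _ ?_) (hbasic N hN hbot) <;> simp [hφ, -ZMod.castHom_apply, ZMod.neg_one_ne_one.symm]

theorem prime_of_isBasic_Hgroup (hr : 3 ≤ r) (hro : Odd r) (hs : 3 ≤ s)
    (h : IsBasic (Gamma r s) (Hgroup r s)) : r.Prime := by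
  have : NeZero r := ⟨by omega⟩
  have : NeZero s := ⟨by omega⟩
  by_contra hnp
  obtain ⟨e, he, h2e, her⟩ := Nat.exists_dvd_of_not_prime2 (by omega) hnp
  have he2 : 2 < e := by
    have := Nat.odd_iff.mp (hro.of_dvd_nat he)
    omega
  have hv0 : ((e : ZMod r), (0 : ZMod s)) ≠ 0 := fun hv =>
    (Nat.le_of_dvd (by omega)
      ((ZMod.natCast_eq_zero_iff e r).mp (congrArg Prod.fst hv))).not_gt her
  exact not_isBasic_of_normalIn_zpowers_addRight he dvd_rfl he2 (by omega) hv0 (by simp)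
    (map_zero _)
    (normalIn_Hgroup_zpowers_addRight (Or.inr rfl) (addRight_natCast_zero_mem_Hgroup e)) h

theorem prime_half_of_isBasic_Hgroup {t : ℕ} (hr : 3 ≤ r) (ht : 2 ≤ t)
    (h : IsBasic (Gamma r (2 * t)) (Hgroup r (2 * t))) : t.Prime := by
  have : NeZero r := ⟨by omega⟩
  have : NeZero (2 * t) := ⟨by omega⟩
  by_contra hnp
  obtain ⟨w, hw, h2w, hwt⟩ := Nat.exists_dvd_of_not_prime2 ht hnp
  have hv0 : ((0 : ZMod r), ((2 * w : ℕ) : ZMod (2 * t))) ≠ 0 := fun hv =>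
    (Nat.le_of_dvd (by omega)
      ((ZMod.natCast_eq_zero_iff _ _).mp (congrArg Prod.snd hv))).not_gt (by omega)
  exact not_isBasic_of_normalIn_zpowers_addRight dvd_rfl (mul_dvd_mul_left 2 hw) (by omega)
    (by omega) hv0 (map_zero _) (by rw [map_natCast, ZMod.natCast_self])
    (normalIn_Hgroup_zpowers_addRight (Or.inl rfl) (addRight_zero_two_mul_mem_Hgroup w)) h

end Torus

/-- if `(Γ(r,s), H(r,s))` (with `r,s ≥ 3`, `r` odd, `s` even) is basic of cycle
type, then `(r,s)` is `(p,4)` or `(p,2q)` for odd primes `p`, `q`. -/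
theorem stmt2 (r s : ℕ) (hr : 3 ≤ r) (hs : 3 ≤ s) (hro : Odd r) (hse : 2 ∣ s)
    (hbasic : BasicOfCycleType (Gamma r s) (Hgroup r s)) :
    (∃ p : ℕ, p.Prime ∧ Odd p ∧ r = p ∧ s = 4) ∨
      (∃ p q : ℕ, p.Prime ∧ Odd p ∧ q.Prime ∧ Odd q ∧ r = p ∧ s = 2 * q) := by
  have hrp := prime_of_isBasic_Hgroup hr hro hs hbasic.1
  obtain ⟨t, rfl⟩ := hse
  have htp := prime_half_of_isBasic_Hgroup hr (by omega) hbasic.1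
  rcases htp.eq_two_or_odd' with rfl | hto
  · exact Or.inl ⟨r, hrp, hro, rfl, rfl⟩
  · exact Or.inr ⟨r, t, hrp, hro, htp, hto, rfl, rfl⟩

end OG4
end

section
/- Let (r,s) be one of (p,4) or (p,2q), where p and q are odd primes. Then for every nontrivial normal subgroup L of H(r,s), the normal quotient Γ(r,s)_L either has at most 2 vertices or is isomorphic to a cycle graph C_m for some m ≥ 3; moreover the normal quotient of Γ(r,s) by ⟨μ⟩ is isomorphic to the cycle C_s and the normal quotient by ⟨ν²⟩ is isomorphic to the cycle C_{2r}. In particular, (Γ(r,s), H(r,s)) is basic of cycle type. -/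
open SimpleGraph

namespace OG4

variable {V : Type*} {W : Type*}

/-!
Every element of `H(r,s)` has the form `(i, j) ↦ (±i + a, ±j + b)`, the two signs agreeing
exactly when `b` is even. Let `L` be a nontrivial normal subgroup. Since `σν` maps `(0, j)` to
`(0, j + 1)`, the relation "`(0, j)` and `(0, j')` lie in one `L`-orbit" is invariant under
translation, hence is congruence modulo some `d ∣ s`. If `μ ∈ L`, the `L`-orbits are the fibres
of `j mod d`, and the quotient is `C_d` or has at most two vertices. Otherwise, as `r` is an odd
prime, commutators with `μ` and `σν` show that `L` fixes the first coordinate; a nontrivial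
element then puts `(0, 2)` or some nonzero even `(0, b)` in the orbit of `(0, 0)`, and as
`s = 2q` this forces `d ∣ 2`. So the orbits are the fibres of `i`, giving `C_r`, or of
`(i, j mod 2)`, giving `C_{2r}` by the Chinese remainder theorem.
-/

section Orbits

variable {V : Type*} {L : Subgroup (Equiv.Perm V)}

theorem mk_eq_mk_iff {x y : V} :
    Quotient.mk (orbitSetoid L) x = Quotient.mk (orbitSetoid L) y ↔ ∃ g ∈ L, g y = x := by
  rw [Quotient.eq]
  exact ⟨fun ⟨⟨g, hg⟩, h⟩ => ⟨g, hg, h⟩, fun ⟨g, hg, h⟩ => ⟨⟨g, hg⟩, h⟩⟩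

theorem NormalIn.commutator_mem {G : Type*} [Group G] {N H : Subgroup G} (hN : NormalIn N H)
    {h g : G} (hh : h ∈ H) (hg : g ∈ N) : h * g * h⁻¹ * g⁻¹ ∈ N :=
  mul_mem (hN.2 h hh g hg) (inv_mem hg)

theorem NormalIn.mk_apply_eq_mk_apply {G : Subgroup (Equiv.Perm V)} (hL : NormalIn L G)
    {h : Equiv.Perm V} (hh : h ∈ G) {x y : V}
    (hxy : Quotient.mk (orbitSetoid L) x = Quotient.mk (orbitSetoid L) y) :
    Quotient.mk (orbitSetoid L) (h x) = Quotient.mk (orbitSetoid L) (h y) := by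
  obtain ⟨g, hg, rfl⟩ := mk_eq_mk_iff.1 hxy
  exact mk_eq_mk_iff.2 ⟨h * g * h⁻¹, hL.2 h hh g hg, by simp⟩

noncomputable def orbitsEquivOfFibers {A : Type*} (f : V → A) (hf : Function.Surjective f)
    (hfib : ∀ x y, Quotient.mk (orbitSetoid L) x = Quotient.mk (orbitSetoid L) y ↔ f x = f y) :
    Quotient (orbitSetoid L) ≃ A :=
  Equiv.ofBijective (Quotient.lift f fun x y h => (hfib x y).1 (Quotient.sound h))
    ⟨fun a b => Quotient.inductionOn₂ a b fun x y h => (hfib x y).2 h,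
      fun a => (hf a).elim fun x hx => ⟨Quotient.mk _ x, hx⟩⟩

theorem card_orbits_eq {A : Type*} (f : V → A) (hf : Function.Surjective f)
    (hfib : ∀ x y, Quotient.mk (orbitSetoid L) x = Quotient.mk (orbitSetoid L) y ↔ f x = f y) :
    Nat.card (Quotient (orbitSetoid L)) = Nat.card A :=
  Nat.card_congr (orbitsEquivOfFibers f hf hfib)

theorem quotientGraph_iso_cycleGraph (Γ : SimpleGraph V) {m : ℕ} (hm : 1 < m) (f : V → ZMod m)
    (hf : Function.Surjective f)
    (hfib : ∀ x y, Quotient.mk (orbitSetoid L) x = Quotient.mk (orbitSetoid L) y ↔ f x = f y)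
    (hadj : ∀ x y, Γ.Adj x y → f y = f x + 1 ∨ f y = f x - 1)
    (hnext : ∀ x, ∃ y, Γ.Adj x y ∧ f y = f x + 1) :
    Nonempty (quotientGraph Γ L ≃g cycleGraph m) := by
  obtain ⟨n, rfl⟩ : ∃ n, m = n + 2 := ⟨m - 2, by omega⟩
  have : Fact (1 < n + 2) := ⟨hm⟩
  have hclose : ∀ x y, (∃ x' y', Quotient.mk (orbitSetoid L) x' = Quotient.mk _ x ∧
      Quotient.mk (orbitSetoid L) y' = Quotient.mk _ y ∧ Γ.Adj x' y') ↔
      (f x - f y = 1 ∨ f y - f x = 1) := by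
    intro x y
    simp only [hfib, sub_eq_iff_eq_add']
    constructor
    · rintro ⟨x', y', hx, hy, h⟩
      rw [← hx, ← hy]
      rcases hadj x' y' h with h | h
      · exact Or.inr h
      · exact Or.inl (by rw [h, sub_add_cancel])
    · rintro (h | h)
      · obtain ⟨z, hyz, hz⟩ := hnext y
        exact ⟨z, y, hz.trans h.symm, rfl, hyz.symm⟩
      · obtain ⟨z, hxz, hz⟩ := hnext x
        exact ⟨x, z, rfl, hz.trans h.symm, hxz⟩
  refine ⟨⟨orbitsEquivOfFibers f hf hfib, fun {a b} => Quotient.inductionOn₂ a b fun x y => ?_⟩⟩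
  change (f x - f y = 1 ∨ f y - f x = 1) ↔ _
  rw [quotientGraph, fromRel_adj, hclose, hclose, or_comm (a := f y - f x = 1), or_self,
    iff_comm, and_iff_right_iff_imp, Ne, hfib]
  rintro (h | h) hxy <;> simp [hxy] at h

theorem mk_eq_mk_iff_of_closure_addRight {A : Type*} [AddCommGroup A] (c : A) {x y : A} :
    Quotient.mk (orbitSetoid (Subgroup.closure {Equiv.addRight c})) x = Quotient.mk _ y ↔
      x - y ∈ AddSubgroup.zmultiples c := by
  simp only [mk_eq_mk_iff, Subgroup.mem_closure_singleton, exists_exists_eq_and,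
    Equiv.zsmul_addRight, Equiv.coe_addRight, AddSubgroup.mem_zmultiples_iff]
  exact exists_congr fun k => eq_sub_iff_add_eq'.symm

end Orbits

section Gamma

variable {r s : ℕ} {L : Subgroup (Equiv.Perm (ZMod r × ZMod s))}

theorem Gamma_adj_sub {x y : ZMod r × ZMod s} (h : (Gamma r s).Adj x y) :
    y - x = (1, 1) ∨ y - x = -(1, 1) ∨ y - x = (1, -1) ∨ y - x = -(1, -1) := by
  rw [Gamma, fromRel_adj] at h
  obtain ⟨-, ⟨h1 | h1, h2 | h2⟩ | ⟨h1 | h1, h2 | h2⟩⟩ := h <;>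
    simp [Prod.ext_iff, h1, h2]

theorem quotientGraph_Gamma_iso_cycleGraph {m : ℕ} (hm : 1 < m) (φ : ZMod r × ZMod s →+ ZMod m)
    (hφ : Function.Surjective φ) (h₁ : φ (1, 1) = 1) (h₂ : φ (1, -1) = 1 ∨ φ (1, -1) = -1)
    (hfib : ∀ x y, Quotient.mk (orbitSetoid L) x = Quotient.mk (orbitSetoid L) y ↔ φ x = φ y) :
    Nonempty (quotientGraph (Gamma r s) L ≃g cycleGraph m) := by
  have : Fact (1 < m) := ⟨hm⟩
  refine quotientGraph_iso_cycleGraph _ hm φ hφ hfib (fun x y h => ?_)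
    fun x => ⟨x + (1, 1), ?_, by rw [map_add, h₁]⟩
  · have hy : φ y = φ x + φ (y - x) := by rw [← map_add, add_sub_cancel]
    rcases h₂ with h₂ | h₂ <;> rcases Gamma_adj_sub h with h | h | h | h <;>
      simp only [hy, h, map_neg, h₁, h₂] <;> simp [sub_eq_add_neg]
  · rw [Gamma, fromRel_adj]
    refine ⟨fun h => one_ne_zero (α := ZMod m) ?_, Or.inl ⟨Or.inl rfl, Or.inl rfl⟩⟩
    rw [← h₁, (left_eq_add).1 h, map_zero]

end Gamma

section ZMod

variable {r s : ℕ}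

theorem _root_.Nat.Prime.three_le_of_odd (hr : r.Prime) (h : Odd r) : 3 ≤ r := by
  have := hr.two_le
  have := Nat.odd_iff.1 h
  omega

theorem zmod_two_eq_zero_or_one (u : ZMod 2) : u = 0 ∨ u = 1 := by decide +revert

theorem ZMod.two_ne_zero_of_two_lt (hs : 2 < s) : (2 : ZMod s) ≠ 0 := by
  intro h
  have := Nat.le_of_dvd two_pos ((ZMod.natCast_eq_zero_iff 2 s).1 (by exact_mod_cast h))
  omega

theorem mem_zmultiples_one_zero_iff {a : ZMod r} {b : ZMod s} :
    (a, b) ∈ AddSubgroup.zmultiples ((1, 0) : ZMod r × ZMod s) ↔ b = 0 := by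
  simp only [AddSubgroup.mem_zmultiples_iff, Prod.smul_mk, smul_zero, Prod.mk.injEq]
  exact ⟨fun ⟨_, _, h⟩ => h.symm, fun h => ⟨a.cast, by simp, h.symm⟩⟩

theorem mem_zmultiples_two_iff (hs : 2 ∣ s) {b : ZMod s} :
    b ∈ AddSubgroup.zmultiples 2 ↔ ZMod.castHom hs (ZMod 2) b = 0 := by
  rw [AddSubgroup.mem_zmultiples_iff]
  constructor
  · rintro ⟨k, rfl⟩
    rw [map_zsmul, map_ofNat, show (2 : ZMod 2) = 0 from rfl, smul_zero]
  · intro h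
    rw [← ZMod.intCast_zmod_cast b, map_intCast, ZMod.intCast_zmod_eq_zero_iff_dvd] at h
    obtain ⟨k, hk⟩ := h
    exact ⟨k, by rw [← ZMod.intCast_zmod_cast b, hk]; push_cast; ring⟩

theorem mem_zmultiples_zero_two_iff (hs : 2 ∣ s) {a : ZMod r} {b : ZMod s} :
    (a, b) ∈ AddSubgroup.zmultiples ((0, 2) : ZMod r × ZMod s) ↔
      a = 0 ∧ ZMod.castHom hs (ZMod 2) b = 0 := by
  rw [← mem_zmultiples_two_iff hs]
  simp only [AddSubgroup.mem_zmultiples_iff, Prod.smul_mk, smul_zero, Prod.mk.injEq]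
  exact ⟨fun ⟨k, ha, hb⟩ => ⟨ha.symm, k, hb⟩, fun ⟨ha, k, hb⟩ => ⟨k, ha.symm, hb⟩⟩

theorem ZMod.exists_dvd_mem_iff_castHom_eq_zero [NeZero s] (D : AddSubgroup (ZMod s)) :
    ∃ d, ∃ hd : d ∣ s, ∀ c, c ∈ D ↔ ZMod.castHom hd (ZMod d) c = 0 := by
  set g : ZMod s ⧸ D := QuotientAddGroup.mk 1
  have hsmul : ∀ c : ZMod s, (QuotientAddGroup.mk c : ZMod s ⧸ D) = c.val • g := by
    intro c
    rw [← QuotientAddGroup.mk_nsmul, nsmul_one, ZMod.natCast_zmod_val]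
  have hd : addOrderOf g ∣ s := by
    apply addOrderOf_dvd_of_nsmul_eq_zero
    rw [← QuotientAddGroup.mk_nsmul, nsmul_one, ZMod.natCast_self, QuotientAddGroup.mk_zero]
  refine ⟨addOrderOf g, hd, fun c => ?_⟩
  have hcast : ZMod.castHom hd (ZMod (addOrderOf g)) c = (c.val : ZMod (addOrderOf g)) := by
    rw [← map_natCast (ZMod.castHom hd _), ZMod.natCast_zmod_val]
  rw [← QuotientAddGroup.eq_zero_iff, hsmul, ← addOrderOf_dvd_iff_nsmul_eq_zero, hcast,
    ZMod.natCast_eq_zero_iff]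

theorem exists_dvd_forall_eq_iff_castHom_eq [NeZero s] {α : Type*} (f : ZMod s → α)
    (hf : ∀ j j', f j = f j' → f (j + 1) = f (j' + 1)) :
    ∃ d, ∃ hd : d ∣ s, ∀ j j',
      f j = f j' ↔ ZMod.castHom hd (ZMod d) j = ZMod.castHom hd (ZMod d) j' := by
  have hshift : ∀ c j j', f j = f j' → f (j + c) = f (j' + c) := by
    intro c
    rw [← ZMod.natCast_zmod_val c]
    induction c.val with
    | zero => simp
    | succ n ih => intro j j' h; simpa [← add_assoc] using hf _ _ (ih j j' h)
  let D : AddSubgroup (ZMod s) :=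
    { carrier := {c | f 0 = f c}
      zero_mem' := rfl
      add_mem' := fun {a b} ha hb => hb.trans (by simpa using hshift b _ _ ha)
      neg_mem' := fun {a} ha => (by simpa using hshift (-a) _ _ ha : f (-a) = f 0).symm }
  obtain ⟨d, hd, hD⟩ := ZMod.exists_dvd_mem_iff_castHom_eq_zero D
  refine ⟨d, hd, fun j j' => ?_⟩
  have : f j = f j' ↔ j' - j ∈ D :=
    ⟨fun h => show f 0 = f (j' - j) by simpa [sub_eq_add_neg] using hshift (-j) _ _ h,
      fun h => by simpa using hshift j 0 (j' - j) h⟩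
  rw [this, hD, map_sub, sub_eq_zero, eq_comm]

theorem gcd_val_eq_two {q : ℕ} (hq : q.Prime) {b : ZMod (2 * q)} (hb : b ≠ 0)
    (hb2 : ZMod.castHom (dvd_mul_right 2 q) (ZMod 2) b = 0) : b.val.gcd (2 * q) = 2 := by
  have : NeZero (2 * q) := ⟨mul_ne_zero two_ne_zero hq.ne_zero⟩
  rw [← ZMod.natCast_zmod_val b, map_natCast, ZMod.natCast_eq_zero_iff] at hb2
  obtain ⟨m, hm⟩ := hb2
  have hmq : m < q := by have := ZMod.val_lt b; omega
  have hm0 : 0 < m := by have := (ZMod.val_pos).2 hb; omega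
  rw [hm, Nat.gcd_mul_left, Nat.Coprime.gcd_eq_one, mul_one]
  exact Nat.coprime_comm.1 ((hq.coprime_iff_not_dvd).2 (Nat.not_dvd_of_pos_of_lt hm0 hmq))

end ZMod

section Affine

def sgn {R : Type*} [Ring R] (u : ZMod 2) : R := (-1) ^ u.val

variable {R S : Type*} [Ring R] [Ring S]

@[simp] theorem sgn_zero : (sgn 0 : R) = 1 := by simp [sgn]

@[simp] theorem sgn_one : (sgn 1 : R) = -1 := by simp [sgn, ZMod.val_one]

theorem sgn_add (u v : ZMod 2) : (sgn (u + v) : R) = sgn u * sgn v := by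
  rcases zmod_two_eq_zero_or_one u with rfl | rfl <;>
    rcases zmod_two_eq_zero_or_one v with rfl | rfl <;>
    simp [show (1 + 1 : ZMod 2) = 0 from rfl]

theorem sgn_mul_self (u : ZMod 2) : (sgn u : R) * sgn u = 1 := by
  rw [← sgn_add, CharTwo.add_self_eq_zero, sgn_zero]

theorem map_sgn (f : R →+* S) (u : ZMod 2) : f (sgn u) = sgn u := by
  simp [sgn]

theorem sgn_zmod_two (u : ZMod 2) : (sgn u : ZMod 2) = 1 := by
  rcases zmod_two_eq_zero_or_one u with rfl | rfl <;> simp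

variable {r s : ℕ}

def affinePerm (u v : ZMod 2) (a : ZMod r) (b : ZMod s) : Equiv.Perm (ZMod r × ZMod s) where
  toFun p := (sgn u * p.1 + a, sgn v * p.2 + b)
  invFun p := (sgn u * (p.1 - a), sgn v * (p.2 - b))
  left_inv p := by simp [← mul_assoc, sgn_mul_self]
  right_inv p := by simp [← mul_assoc, sgn_mul_self]

@[simp] theorem affinePerm_apply (u v : ZMod 2) (a : ZMod r) (b : ZMod s)
    (p : ZMod r × ZMod s) :
    affinePerm u v a b p = (sgn u * p.1 + a, sgn v * p.2 + b) := rfl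

theorem affinePerm_mul (u v u' v' : ZMod 2) (a a' : ZMod r) (b b' : ZMod s) :
    affinePerm u v a b * affinePerm u' v' a' b' =
      affinePerm (u + u') (v + v') (sgn u * a' + a) (sgn v * b' + b) := by
  ext p <;> simp [sgn_add] <;> ring

theorem affinePerm_zero : affinePerm 0 0 (0 : ZMod r) (0 : ZMod s) = 1 := by
  ext p <;> simp

theorem affinePerm_inv (u v : ZMod 2) (a : ZMod r) (b : ZMod s) :
    (affinePerm u v a b)⁻¹ = affinePerm u v (-(sgn u * a)) (-(sgn v * b)) := by
  refine inv_eq_of_mul_eq_one_right ?_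
  rw [affinePerm_mul, CharTwo.add_self_eq_zero, CharTwo.add_self_eq_zero, mul_neg, mul_neg,
    ← mul_assoc, ← mul_assoc, sgn_mul_self, sgn_mul_self, one_mul, one_mul, neg_add_cancel,
    neg_add_cancel, affinePerm_zero]

theorem affinePerm_conj_addRight (u v : ZMod 2) (a : ZMod r) (b c : ZMod s) :
    affinePerm u v a b * Equiv.addRight (0, c) * (affinePerm u v a b)⁻¹ =
      Equiv.addRight (0, sgn v * c) := by
  ext p <;> simp [affinePerm_inv, mul_add, ← mul_assoc, sgn_mul_self]
  ring

theorem affinePerm_zero_zero (a : ZMod r) (b : ZMod s) :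
    affinePerm 0 0 a b = Equiv.addRight (a, b) := by
  ext p <;> simp

/-- The two signs of `affinePerm u v a b` agree exactly when `b` is even. -/
def affineH (r : ℕ) {s : ℕ} (hs : 2 ∣ s) : Subgroup (Equiv.Perm (ZMod r × ZMod s)) where
  carrier := {g | ∃ u v a b, ZMod.castHom hs (ZMod 2) b = u + v ∧ affinePerm u v a b = g}
  one_mem' := ⟨0, 0, 0, 0, by simp, affinePerm_zero⟩
  mul_mem' := by
    rintro _ _ ⟨u, v, a, b, h, rfl⟩ ⟨u', v', a', b', h', rfl⟩
    refine ⟨_, _, _, _, ?_, (affinePerm_mul ..).symm⟩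
    rw [map_add, map_mul, map_sgn, sgn_zmod_two, one_mul, h, h']
    ring
  inv_mem' := by
    rintro _ ⟨u, v, a, b, h, rfl⟩
    refine ⟨_, _, _, _, ?_, (affinePerm_inv ..).symm⟩
    rw [map_neg, map_mul, map_sgn, sgn_zmod_two, one_mul, h, ZMod.neg_eq_self_mod_two]

end Affine

section Hgroup

variable {r s : ℕ}

theorem mu_eq_affinePerm : mu r s = affinePerm 0 0 1 0 := by ext p <;> simp [mu]

theorem sigmaNu_eq_affinePerm : sigmaNu r s = affinePerm 1 0 0 1 := by ext p <;> simp [sigmaNu]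

theorem tau_eq_affinePerm : tau r s = affinePerm 1 1 0 0 := by ext p <;> simp [tau]

theorem nuSq_eq_addRight : nuSq r s = Equiv.addRight (0, 2) := by ext p <;> simp [nuSq]

theorem Hgroup_le_affineH (hs : 2 ∣ s) : Hgroup r s ≤ affineH r hs := by
  refine (Subgroup.closure_le _).2 ?_
  rintro _ (rfl | rfl | rfl)
  · exact ⟨0, 0, 1, 0, by simp, mu_eq_affinePerm.symm⟩
  · exact ⟨1, 0, 0, 1, by rw [map_one, add_zero], sigmaNu_eq_affinePerm.symm⟩
  · exact ⟨1, 1, 0, 0, by simp; rfl, tau_eq_affinePerm.symm⟩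

theorem mu_mem_Hgroup : mu r s ∈ Hgroup r s := Subgroup.subset_closure (by simp)

theorem sigmaNu_mem_Hgroup : sigmaNu r s ∈ Hgroup r s := Subgroup.subset_closure (by simp)

theorem nuSq_mem_Hgroup : nuSq r s ∈ Hgroup r s := by
  have : nuSq r s = sigmaNu r s * sigmaNu r s := by
    ext p <;> simp [nuSq, sigmaNu, add_assoc, one_add_one_eq_two]
  rw [this]
  exact mul_mem sigmaNu_mem_Hgroup sigmaNu_mem_Hgroup

end Hgroup

section NormalSubgroups

variable {r s : ℕ} {L : Subgroup (Equiv.Perm (ZMod r × ZMod s))}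

theorem addRight_mem_of_mu_mem (hμ : mu r s ∈ L) (a : ZMod r) : Equiv.addRight (a, 0) ∈ L := by
  have := zpow_mem hμ (a.cast : ℤ)
  rwa [mu_eq_addRight, Equiv.zsmul_addRight, Prod.smul_mk, smul_zero, zsmul_one,
    ZMod.intCast_zmod_cast] at this

theorem mu_mem_of_addRight_mem [Fact r.Prime] {c : ZMod r} (hc : c ≠ 0)
    (h : Equiv.addRight (c, (0 : ZMod s)) ∈ L) : mu r s ∈ L := by
  have := zpow_mem h ((c⁻¹).cast : ℤ)
  rwa [Equiv.zsmul_addRight, Prod.smul_mk, smul_zero, zsmul_eq_mul, ZMod.intCast_zmod_cast,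
    inv_mul_cancel₀ hc, ← mu_eq_addRight] at this

theorem mu_mem_of_affinePerm_mem [Fact r.Prime] (hr : Odd r) (hL : NormalIn L (Hgroup r s))
    {u v : ZMod 2} {a : ZMod r} {b : ZMod s} (hg : affinePerm u v a b ∈ L)
    (hua : u ≠ 0 ∨ a ≠ 0) : mu r s ∈ L := by
  have h2 : (2 : ZMod r) ≠ 0 :=
    ZMod.two_ne_zero_of_two_lt ((Fact.out : r.Prime).three_le_of_odd hr)
  rcases zmod_two_eq_zero_or_one u with rfl | rfl
  · have h2a : 2 * a ≠ 0 := mul_ne_zero h2 (hua.resolve_left (by simp))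
    rcases zmod_two_eq_zero_or_one v with rfl | rfl
    · refine mu_mem_of_addRight_mem (neg_ne_zero.2 h2a) ?_
      convert hL.commutator_mem sigmaNu_mem_Hgroup hg using 1
      ext p <;> simp [sigmaNu_eq_affinePerm, affinePerm_inv] <;> ring
    · refine mu_mem_of_addRight_mem h2a ?_
      convert mul_mem hg hg using 1
      ext p <;> simp
      ring
  · refine mu_mem_of_addRight_mem h2 ?_
    convert hL.commutator_mem mu_mem_Hgroup hg using 1
    rcases zmod_two_eq_zero_or_one v with rfl | rfl <;>
      ext p <;> simp [mu_eq_affinePerm, affinePerm_inv] <;> ring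

theorem exists_affinePerm_eq_of_mu_not_mem [Fact r.Prime] (hr : Odd r) (hs : 2 ∣ s)
    (hL : NormalIn L (Hgroup r s)) (hμ : mu r s ∉ L) {g : Equiv.Perm (ZMod r × ZMod s)}
    (hg : g ∈ L) : ∃ v b, ZMod.castHom hs (ZMod 2) b = v ∧ affinePerm 0 v 0 b = g := by
  obtain ⟨u, v, a, b, hb, rfl⟩ := Hgroup_le_affineH hs (hL.1 hg)
  obtain ⟨rfl, rfl⟩ : u = 0 ∧ a = 0 := by
    by_contra h
    exact hμ (mu_mem_of_affinePerm_mem hr hL hg (not_and_or.1 h))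
  exact ⟨v, b, by simpa using hb, rfl⟩

theorem mk_zero_add_one (hL : NormalIn L (Hgroup r s)) {j j' : ZMod s}
    (h : Quotient.mk (orbitSetoid L) (0, j) = Quotient.mk _ (0, j')) :
    Quotient.mk (orbitSetoid L) (0, j + 1) = Quotient.mk _ (0, j' + 1) := by
  simpa [sigmaNu] using hL.mk_apply_eq_mk_apply sigmaNu_mem_Hgroup h

theorem mk_eq_mk_iff_of_mu_mem (hμ : mu r s ∈ L) {x y : ZMod r × ZMod s} :
    Quotient.mk (orbitSetoid L) x = Quotient.mk _ y ↔
      Quotient.mk (orbitSetoid L) (0, x.2) = Quotient.mk _ (0, y.2) := by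
  have key (z : ZMod r × ZMod s) : Quotient.mk (orbitSetoid L) z = Quotient.mk _ (0, z.2) :=
    mk_eq_mk_iff.2 ⟨_, addRight_mem_of_mu_mem hμ z.1, by simp⟩
  rw [key x, key y]

theorem mk_eq_mk_iff_of_mu_not_mem [Fact r.Prime] (hr : Odd r) (hs : 2 ∣ s)
    (hL : NormalIn L (Hgroup r s)) (hμ : mu r s ∉ L) {x y : ZMod r × ZMod s} :
    Quotient.mk (orbitSetoid L) x = Quotient.mk _ y ↔
      x.1 = y.1 ∧ Quotient.mk (orbitSetoid L) (0, x.2) = Quotient.mk _ (0, y.2) := by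
  simp only [mk_eq_mk_iff]
  constructor
  · rintro ⟨g, hg, rfl⟩
    obtain ⟨v, b, -, rfl⟩ := exists_affinePerm_eq_of_mu_not_mem hr hs hL hμ hg
    exact ⟨by simp, _, hg, by simp⟩
  · rintro ⟨h1, g, hg, h2⟩
    obtain ⟨v, b, -, rfl⟩ := exists_affinePerm_eq_of_mu_not_mem hr hs hL hμ hg
    exact ⟨_, hg, Prod.ext (by simp [h1]) (by simpa using congrArg Prod.snd h2)⟩

theorem exists_mk_eq_mk_zero_of_mu_not_mem [Fact r.Prime] (hr : Odd r) {q : ℕ} (hq : q.Prime)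
    {L : Subgroup (Equiv.Perm (ZMod r × ZMod (2 * q)))} (hL : NormalIn L (Hgroup r (2 * q)))
    (hL1 : L ≠ ⊥) (hμ : mu r (2 * q) ∉ L) :
    ∃ b : ZMod (2 * q), b ≠ 0 ∧ ZMod.castHom (dvd_mul_right 2 q) (ZMod 2) b = 0 ∧
      Quotient.mk (orbitSetoid L) (0, b) = Quotient.mk _ (0, 0) := by
  obtain ⟨⟨g, hg⟩, hg1⟩ := Subgroup.ne_bot_iff_exists_ne_one.1 hL1
  obtain ⟨v, b, hb, rfl⟩ := exists_affinePerm_eq_of_mu_not_mem hr (dvd_mul_right 2 q) hL hμ hg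
  rcases zmod_two_eq_zero_or_one v with rfl | rfl
  · refine ⟨b, fun h => hg1 ?_, hb, mk_eq_mk_iff.2 ⟨_, hg, by simp⟩⟩
    simp [h, affinePerm_zero]
  · have h2 : (2 : ZMod (2 * q)) ≠ 0 := ZMod.two_ne_zero_of_two_lt (by linarith [hq.two_le])
    refine ⟨2, h2, by rw [map_ofNat]; rfl,
      mk_eq_mk_iff.2 ⟨_, hL.commutator_mem sigmaNu_mem_Hgroup hg, ?_⟩⟩
    simp [sigmaNu_eq_affinePerm, affinePerm_inv, one_add_one_eq_two]

end NormalSubgroups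

section Quotients

variable {r s : ℕ} {L : Subgroup (Equiv.Perm (ZMod r × ZMod s))}

theorem quotientGraph_Gamma_iso_cycleGraph_two_mul (hr : Odd r) (hs : 2 ∣ s)
    (hfib : ∀ x y, Quotient.mk (orbitSetoid L) x = Quotient.mk _ y ↔
      x.1 = y.1 ∧ ZMod.castHom hs (ZMod 2) x.2 = ZMod.castHom hs (ZMod 2) y.2) :
    Nonempty (quotientGraph (Gamma r s) L ≃g cycleGraph (2 * r)) := by
  let χ := (ZMod.chineseRemainder (Nat.coprime_two_left.2 hr)).symm
  let π : ZMod r × ZMod s →+ ZMod 2 × ZMod r :=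
    ((ZMod.castHom hs (ZMod 2)).toAddMonoidHom.comp (AddMonoidHom.snd _ _)).prod
      (AddMonoidHom.fst _ _)
  have hπ : Function.Surjective π := fun ⟨e, i⟩ =>
    (ZMod.castHom_surjective hs e).elim fun j hj => ⟨(i, j), Prod.ext hj rfl⟩
  have hπ₁ : π (1, 1) = 1 := Prod.ext (map_one (ZMod.castHom hs (ZMod 2))) rfl
  have hπ₂ : π (1, -1) = 1 :=
    Prod.ext (show ZMod.castHom hs (ZMod 2) (-1) = 1 by rw [map_neg, map_one]; rfl) rfl
  refine quotientGraph_Gamma_iso_cycleGraph (by have := hr.pos; omega) (χ.toAddMonoidHom.comp π)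
    (χ.surjective.comp hπ) ?_ (Or.inl ?_) fun x y => ?_
  · exact (congrArg χ hπ₁).trans (map_one χ)
  · exact (congrArg χ hπ₂).trans (map_one χ)
  simp [hfib, π, χ.injective.eq_iff, and_comm]

theorem quotientGraph_closure_mu_iso (hs : 1 < s) :
    Nonempty (quotientGraph (Gamma r s) (Subgroup.closure {mu r s}) ≃g cycleGraph s) := by
  rw [mu_eq_addRight]
  refine quotientGraph_Gamma_iso_cycleGraph hs (AddMonoidHom.snd _ _) Prod.snd_surjective rfl
    (Or.inr rfl) fun ⟨a, b⟩ ⟨a', b'⟩ => ?_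
  rw [mk_eq_mk_iff_of_closure_addRight, Prod.mk_sub_mk, mem_zmultiples_one_zero_iff, sub_eq_zero]
  rfl

theorem quotientGraph_closure_nuSq_iso (hr : Odd r) (hs : 2 ∣ s) :
    Nonempty (quotientGraph (Gamma r s) (Subgroup.closure {nuSq r s}) ≃g cycleGraph (2 * r)) := by
  rw [nuSq_eq_addRight]
  refine quotientGraph_Gamma_iso_cycleGraph_two_mul hr hs fun ⟨a, b⟩ ⟨a', b'⟩ => ?_
  rw [mk_eq_mk_iff_of_closure_addRight, Prod.mk_sub_mk, mem_zmultiples_zero_two_iff hs,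
    sub_eq_zero, map_sub, sub_eq_zero]

theorem normalIn_closure_nuSq (hs : 2 ∣ s) :
    NormalIn (Subgroup.closure {nuSq r s}) (Hgroup r s) := by
  refine ⟨(Subgroup.closure_le _).2 (Set.singleton_subset_iff.2 nuSq_mem_Hgroup),
    fun h hh n hn => ?_⟩
  obtain ⟨k, rfl⟩ := Subgroup.mem_closure_singleton.1 hn
  obtain ⟨u, v, a, b, -, rfl⟩ := Hgroup_le_affineH hs hh
  rw [← conj_zpow, nuSq_eq_addRight, affinePerm_conj_addRight]
  refine zpow_mem ?_ k
  rcases zmod_two_eq_zero_or_one v with rfl | rfl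
  · simp
  · rw [show ((0, sgn 1 * 2) : ZMod r × ZMod s) = -(0, 2) by simp, ← Equiv.neg_addRight]
    exact inv_mem (Subgroup.mem_closure_singleton_self _)

theorem closure_nuSq_ne_bot (hs : 2 < s) : Subgroup.closure {nuSq r s} ≠ ⊥ := by
  rw [Ne, Subgroup.closure_eq_bot_iff, Set.singleton_subset_iff, Set.mem_singleton_iff,
    nuSq_eq_addRight]
  intro h
  exact ZMod.two_ne_zero_of_two_lt hs (by simpa using congrArg (fun g => (g 0).2) h)

end Quotients

theorem card_le_two_or_isoCycle_of_mu_mem {r s d : ℕ}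
    {L : Subgroup (Equiv.Perm (ZMod r × ZMod s))} (hμ : mu r s ∈ L) (hd : d ∣ s)
    (hcol : ∀ j j', Quotient.mk (orbitSetoid L) ((0 : ZMod r), j) = Quotient.mk _ (0, j') ↔
      ZMod.castHom hd (ZMod d) j = ZMod.castHom hd (ZMod d) j') :
    Nat.card (Quotient (orbitSetoid L)) ≤ 2 ∨ IsoCycle (quotientGraph (Gamma r s) L) := by
  let φ := (ZMod.castHom hd (ZMod d)).toAddMonoidHom.comp (AddMonoidHom.snd (ZMod r) _)
  have hφ : Function.Surjective φ := (ZMod.castHom_surjective hd).comp Prod.snd_surjective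
  have hfib : ∀ x y, Quotient.mk (orbitSetoid L) x = Quotient.mk _ y ↔ φ x = φ y :=
    fun x y => (mk_eq_mk_iff_of_mu_mem hμ).trans (hcol _ _)
  rcases le_or_gt d 2 with hd2 | hd2
  · left
    rwa [card_orbits_eq φ hφ hfib, Nat.card_zmod]
  · exact Or.inr ⟨d, hd2, quotientGraph_Gamma_iso_cycleGraph (by omega) φ hφ
      (map_one (ZMod.castHom hd (ZMod d)))
      (Or.inr (show ZMod.castHom hd (ZMod d) (-1) = -1 by rw [map_neg, map_one])) hfib⟩

theorem isoCycle_of_mu_not_mem {r q d : ℕ} [Fact r.Prime] (hr : Odd r) (hq : q.Prime)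
    {L : Subgroup (Equiv.Perm (ZMod r × ZMod (2 * q)))} (hL : NormalIn L (Hgroup r (2 * q)))
    (hL1 : L ≠ ⊥) (hμ : mu r (2 * q) ∉ L) (hd : d ∣ 2 * q)
    (hcol : ∀ j j', Quotient.mk (orbitSetoid L) ((0 : ZMod r), j) = Quotient.mk _ (0, j') ↔
      ZMod.castHom hd (ZMod d) j = ZMod.castHom hd (ZMod d) j') :
    IsoCycle (quotientGraph (Gamma r (2 * q)) L) := by
  have : NeZero (2 * q) := ⟨mul_ne_zero two_ne_zero hq.ne_zero⟩
  have hfib (x y : ZMod r × ZMod (2 * q)) :=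
    mk_eq_mk_iff_of_mu_not_mem hr (dvd_mul_right 2 q) hL hμ (x := x) (y := y)
  obtain ⟨b, hb0, hb2, hb⟩ := exists_mk_eq_mk_zero_of_mu_not_mem hr hq hL hL1 hμ
  have hdb : d ∣ b.val := by
    rw [← ZMod.natCast_eq_zero_iff, ← map_natCast (ZMod.castHom hd (ZMod d)),
      ZMod.natCast_zmod_val, ← map_zero (ZMod.castHom hd (ZMod d)), ← hcol]
    exact hb
  have h2 : d ∣ 2 := gcd_val_eq_two hq hb0 hb2 ▸ Nat.dvd_gcd hdb hd
  have hr3 := (Fact.out : r.Prime).three_le_of_odd hr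
  rcases (Nat.dvd_prime Nat.prime_two).1 h2 with rfl | rfl
  · refine ⟨r, hr3, quotientGraph_Gamma_iso_cycleGraph (by omega) (AddMonoidHom.fst _ _)
      Prod.fst_surjective rfl (Or.inl rfl) fun x y => ?_⟩
    rw [hfib, hcol, and_iff_left (Subsingleton.elim _ _)]
    rfl
  · exact ⟨2 * r, by omega, quotientGraph_Gamma_iso_cycleGraph_two_mul hr hd
      fun x y => (hfib x y).trans (and_congr_right' (hcol _ _))⟩

theorem isBasic_Gamma_Hgroup {r q : ℕ} (hr : r.Prime) (hr2 : Odd r) (hq : q.Prime) :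
    IsBasic (Gamma r (2 * q)) (Hgroup r (2 * q)) := by
  have : Fact r.Prime := ⟨hr⟩
  have : NeZero (2 * q) := ⟨mul_ne_zero two_ne_zero hq.ne_zero⟩
  intro L hL hL1
  obtain ⟨d, hd, hcol⟩ := exists_dvd_forall_eq_iff_castHom_eq
    (fun j => Quotient.mk (orbitSetoid L) ((0 : ZMod r), j)) fun _ _ => mk_zero_add_one hL
  by_cases hμ : mu r (2 * q) ∈ L
  · exact card_le_two_or_isoCycle_of_mu_mem hμ hd hcol
  · exact Or.inr (isoCycle_of_mu_not_mem hr2 hq hL hL1 hμ hd hcol)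

/-- for `(r,s)` of the form `(p,4)` or `(p,2q)` with `p`, `q` odd primes,
every normal quotient of `(Γ(r,s), H(r,s))` by a nontrivial normal subgroup is degenerate,
the quotient by `⟨μ⟩` is `C_s`, the quotient by `⟨ν²⟩` is `C_{2r}`, and the pair is basic
of cycle type. -/
theorem stmt7 (r s : ℕ)
    (h : (r.Prime ∧ Odd r ∧ s = 4) ∨
      (∃ q : ℕ, r.Prime ∧ Odd r ∧ q.Prime ∧ Odd q ∧ s = 2 * q)) :
    (∀ L : Subgroup (Equiv.Perm (ZMod r × ZMod s)), NormalIn L (Hgroup r s) → L ≠ ⊥ →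
      Nat.card (Quotient (orbitSetoid L)) ≤ 2 ∨ IsoCycle (quotientGraph (Gamma r s) L)) ∧
    Nonempty (quotientGraph (Gamma r s) (Subgroup.closure {mu r s}) ≃g
      SimpleGraph.cycleGraph s) ∧
    Nonempty (quotientGraph (Gamma r s) (Subgroup.closure {nuSq r s}) ≃g
      SimpleGraph.cycleGraph (2 * r)) ∧
    BasicOfCycleType (Gamma r s) (Hgroup r s) := by
  obtain ⟨hr, hr2, q, hq, rfl⟩ : r.Prime ∧ Odd r ∧ ∃ q, q.Prime ∧ s = 2 * q := by
    rcases h with ⟨hr, hr2, rfl⟩ | ⟨q, hr, hr2, hq, -, rfl⟩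
    exacts [⟨hr, hr2, 2, Nat.prime_two, rfl⟩, ⟨hr, hr2, q, hq, rfl⟩]
  have := hq.two_le
  have hbasic := isBasic_Gamma_Hgroup hr hr2 hq
  have hν := quotientGraph_closure_nuSq_iso hr2 (dvd_mul_right 2 q)
  exact ⟨hbasic, quotientGraph_closure_mu_iso (by omega), hν, hbasic, _,
    normalIn_closure_nuSq (dvd_mul_right 2 q), closure_nuSq_ne_bot (by omega),
    2 * r, by linarith [hr.two_le], hν⟩

end OG4
end
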